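/- arXiv:0710.3460 — 4 statements merged into one kernel-verified Lean document; each statement's English description precedes it below -/
import Mathlib

section
/- Let Δ be a locally finite tree, let Γ ≤ Aut(Δ) be a k-acylindrical subgroup (k ≥ 1), and fix a vertex P of Δ. For every integer m ≥ 0, the map ᾱ defined by ᾱ(σ) = (o(σ), α(Γσ)), where o(σ) is the initial subsegment of length k+1 of σ, is a bijection from the set of directed segments of length m+k+1 with initial vertex P onto the set W̄_m of decorated words of length m+1. -/
/-- A directed segment of length `n` in the graph `G`: a sequence of `n+1` vertices
with `d(sᵢ, sⱼ) = |i - j|`. -/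
def IsSegment {V : Type*} (G : SimpleGraph V) {n : ℕ} (s : Fin (n + 1) → V) : Prop :=
  ∀ i j : Fin (n + 1), G.dist (s i) (s j) = (((i : ℕ) : ℤ) - ((j : ℕ) : ℤ)).natAbs

/-- The set `𝔖ₙ` of directed segments of length `n` in `G`, as a type. -/
def Seg {V : Type*} (G : SimpleGraph V) (n : ℕ) : Type _ :=
  {s : Fin (n + 1) → V // IsSegment G s}

/-- The orbit relation of a subgroup `Γ ≤ Perm V` acting componentwise on segments. -/
def OrbRel {V : Type*} {G : SimpleGraph V} (Γ : Subgroup (Equiv.Perm V)) {n : ℕ}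
    (s t : Seg G n) : Prop :=
  ∃ g ∈ Γ, ∀ i, g (s.1 i) = t.1 i

/-- The alphabet `A = Γ\𝔖_{k+1}`. -/
def Alphabet {V : Type*} (G : SimpleGraph V) (Γ : Subgroup (Equiv.Perm V)) (k : ℕ) : Type _ :=
  Quot (OrbRel (G := G) Γ (n := k + 1))

/-- The transition relation: `Mrel G Γ b a` means `M(b, a) = 1`. -/
def Mrel {V : Type*} (G : SimpleGraph V) (Γ : Subgroup (Equiv.Perm V)) {k : ℕ}
    (b a : Alphabet G Γ k) : Prop :=
  ∃ σ τ : Seg G (k + 1), Quot.mk _ σ = a ∧ Quot.mk _ τ = b ∧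
    ∀ j : Fin (k + 1), τ.1 j.castSucc = σ.1 j.succ

/-- A function `w : Fin (m+1) → A` is an admissible word (an element of `W_m`). -/
def Admissible {V : Type*} (G : SimpleGraph V) (Γ : Subgroup (Equiv.Perm V)) {k m : ℕ}
    (w : Fin (m + 1) → Alphabet G Γ k) : Prop :=
  ∀ j : Fin m, Mrel G Γ (w j.succ) (w j.castSucc)

/-- The subsegment `(s_j, …, s_{j+k+1})` of a directed segment of length `m+k+1`. -/
def subseg {V : Type*} (G : SimpleGraph V) (m k : ℕ) (σ : Seg G (m + k + 1))
    (j : Fin (m + 1)) : Seg G (k + 1) :=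
  ⟨fun i => σ.1 ⟨(i : ℕ) + (j : ℕ), by have := i.isLt; have := j.isLt; omega⟩, by
    intro i i'
    have h := σ.2 ⟨(i : ℕ) + (j : ℕ), by have := i.isLt; have := j.isLt; omega⟩
      ⟨(i' : ℕ) + (j : ℕ), by have := i'.isLt; have := j.isLt; omega⟩
    simp only [Fin.val_mk] at h ⊢
    rw [h]
    push_cast
    omega⟩

/-- The word `α(Γσ) ∈ W_m` associated with a directed segment of length `m+k+1`. -/
def wordOf {V : Type*} (G : SimpleGraph V) (Γ : Subgroup (Equiv.Perm V)) (m k : ℕ)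
    (σ : Seg G (m + k + 1)) : Fin (m + 1) → Alphabet G Γ k :=
  fun j => Quot.mk _ (subseg G m k σ j)

/-!
Reading off the Γ-orbits of the consecutive windows of length `k + 1` of a segment loses no
information once its first window is known: two segments with the same first window and the same
word agree vertex by vertex, since an element of Γ carrying the window at position `j` of one
onto that of the other fixes their common first `k + 1` vertices, a segment of length `k`, and is
therefore trivial by `k`-acylindricity. Conversely, an admissible word is realised by choosing,
window after window, a representative overlapping the previous one; the glued sequence has no
backtracking because consecutive triples lie in a window (this needs `k ≥ 1`), and in a tree a
walk without backtracking is a geodesic.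
-/

lemma Fin.clamp_eq_mk {n m : ℕ} (h : n ≤ m) : Fin.clamp n m = ⟨n, Nat.lt_succ_of_le h⟩ :=
  Fin.ext (by simp [Fin.clamp, h])

lemma exists_chain_lift {X A : Type*} (π : X → A) {R : A → A → Prop} {O : X → X → Prop}
    (hlift : ∀ x b, R (π x) b → ∃ y, π y = b ∧ O x y) (w : ℕ → A) (m : ℕ)
    (hw : ∀ j < m, R (w j) (w (j + 1))) (x₀ : X) (hx₀ : π x₀ = w 0) :
    ∃ f : ℕ → X, f 0 = x₀ ∧ (∀ j ≤ m, π (f j) = w j) ∧ ∀ j < m, O (f j) (f (j + 1)) := by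
  induction m with
  | zero =>
    refine ⟨fun _ => x₀, rfl, fun j hj => ?_, by simp⟩
    obtain rfl : j = 0 := by omega
    exact hx₀
  | succ m ih =>
    obtain ⟨f, hf0, hfw, hfO⟩ := ih fun j hj => hw j (by omega)
    obtain ⟨y, hyw, hyO⟩ := hlift (f m) (w (m + 1)) (hfw m le_rfl ▸ hw m (by omega))
    refine ⟨fun j => if j ≤ m then f j else y, by simpa using hf0, fun j hj => ?_, fun j hj => ?_⟩
    · by_cases hjm : j ≤ m
      · simpa [hjm] using hfw j hjm
      · simpa [hjm, show j = m + 1 by omega] using hyw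
    · by_cases hjm : j + 1 ≤ m
      · simpa [hjm, show j ≤ m by omega] using hfO j hjm
      · simpa [show j = m by omega] using hyO

lemma exists_seq_of_overlapping_windows {α : Type*} {k m : ℕ} (f : ℕ → Fin (k + 2) → α)
    (hf : ∀ j < m, ∀ i : Fin (k + 1), f (j + 1) i.castSucc = f j i.succ) :
    ∃ S : ℕ → α, ∀ l ≤ m, ∀ i, f l i = S (l + i) := by
  refine ⟨fun n => f (n - (k + 1)) (Fin.clamp n (k + 1)), fun l hl i => ?_⟩
  induction l generalizing i with
  | zero =>
    have hi : (i : ℕ) ≤ k + 1 := Nat.le_of_lt_succ i.2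
    simp [Nat.sub_eq_zero_of_le hi, Fin.clamp_eq_mk hi]
  | succ l ih =>
    rcases i.eq_castSucc_or_eq_last with ⟨i, rfl⟩ | rfl
    · rw [hf l hl i, ih (by omega)]
      simp [add_assoc, add_comm 1]
    · simp [Fin.clamp_eq_last _ _ (by omega : k + 1 ≤ l + 1 + (k + 1))]

namespace SimpleGraph

variable {V V' : Type*} {G : SimpleGraph V} {G' : SimpleGraph V'}

lemma Reachable.dist_map_le {u v : V} (h : G.Reachable u v) (f : G →g G') :
    G'.dist (f u) (f v) ≤ G.dist u v := by
  obtain ⟨p, hp⟩ := h.exists_walk_length_eq_dist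
  simpa [hp] using dist_le (p.map f)

lemma Reachable.dist_iso {u v : V} (h : G.Reachable u v) (e : G ≃g G') :
    G'.dist (e u) (e v) = G.dist u v := by
  refine le_antisymm (h.dist_map_le e.toHom) ?_
  simpa using (h.map e.toHom).dist_map_le e.symm.toHom

lemma IsAcyclic.eq_of_adj_of_dist_eq_add_one (hG : G.IsAcyclic) (hconn : G.Connected)
    {x u v w : V} (hv : G.Adj v u) (hw : G.Adj w u) (hdv : G.dist x u = G.dist x v + 1)
    (hdw : G.dist x u = G.dist x w + 1) : v = w := by
  obtain ⟨p, hp⟩ := hconn.exists_walk_length_eq_dist x v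
  obtain ⟨q, hq⟩ := hconn.exists_walk_length_eq_dist x w
  have hp' : (p.concat hv).IsPath := (p.concat hv).isPath_of_length_eq_dist (by simp [hp, hdv])
  have hq' : (q.concat hw).IsPath := (q.concat hw).isPath_of_length_eq_dist (by simp [hq, hdw])
  exact (Walk.concat_inj (Subtype.mk.inj ((hG.subsingleton_path x u).elim ⟨_, hp'⟩ ⟨_, hq'⟩))).1

end SimpleGraph

section

open SimpleGraph

variable {V : Type*} {G : SimpleGraph V} {Γ : Subgroup (Equiv.Perm V)}

def IsSegmentUpTo (G : SimpleGraph V) (S : ℕ → V) (N : ℕ) : Prop :=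
  ∀ i ≤ N, ∀ j ≤ N, G.dist (S i) (S j) = ((i : ℤ) - j).natAbs

lemma IsSegmentUpTo.succ (hG : G.IsAcyclic) (hconn : G.Connected) {S : ℕ → V} {N : ℕ}
    (hS : IsSegmentUpTo G S N) (hadj : G.Adj (S N) (S (N + 1))) (hne : S (N + 1) ≠ S (N - 1)) :
    IsSegmentUpTo G S (N + 1) := by
  have hlast : ∀ i ≤ N, G.dist (S i) (S (N + 1)) = N + 1 - i := by
    intro i hi
    rcases hi.eq_or_lt with rfl | hlt
    · simp [dist_eq_one_iff_adj.2 hadj]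
    have hprev : G.Adj (S (N - 1)) (S N) :=
      dist_eq_one_iff_adj.1 (by rw [hS _ (by omega) _ le_rfl]; omega)
    rcases hG.dist_eq_dist_add_one_of_adj_of_reachable (S i) hadj (hconn _ _) with h | h
    · exact absurd (hG.eq_of_adj_of_dist_eq_add_one hconn hadj.symm hprev h
        (by rw [hS _ hlt.le _ le_rfl, hS _ hlt.le _ (by omega)]; omega)) hne
    · rw [h, hS _ hlt.le _ le_rfl]; omega
  intro i hi j hj
  rcases Nat.lt_or_ge N i with hi' | hi' <;> rcases Nat.lt_or_ge N j with hj' | hj'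
  · obtain rfl : i = j := by omega
    simp
  · obtain rfl : i = N + 1 := by omega
    rw [SimpleGraph.dist_comm, hlast j hj']; omega
  · obtain rfl : j = N + 1 := by omega
    rw [hlast i hi']; omega
  · exact hS i hi' j hj'

lemma SimpleGraph.IsAcyclic.isSegmentUpTo_of_adj_of_ne (hG : G.IsAcyclic) (hconn : G.Connected)
    {S : ℕ → V} {N : ℕ} (hadj : ∀ i < N, G.Adj (S i) (S (i + 1)))
    (hne : ∀ i, i + 2 ≤ N → S (i + 2) ≠ S i) : IsSegmentUpTo G S N := by
  induction N with
  | zero =>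
    intro i hi j hj
    obtain ⟨rfl, rfl⟩ : i = 0 ∧ j = 0 := by omega
    simp
  | succ N ih =>
    refine (ih (fun i hi => hadj i (by omega)) (fun i hi => hne i (by omega))).succ hG hconn
      (hadj N (by omega)) ?_
    rcases N with _ | N
    · exact (hadj 0 (by omega)).ne'
    · exact hne N (by omega)

lemma SimpleGraph.IsAcyclic.isSegmentUpTo_of_windows (hG : G.IsAcyclic) (hconn : G.Connected)
    {S : ℕ → V} {k m : ℕ} (hk : 1 ≤ k)
    (hS : ∀ l ≤ m, IsSegmentUpTo G (fun i => S (l + i)) (k + 1)) :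
    IsSegmentUpTo G S (m + k + 1) := by
  refine hG.isSegmentUpTo_of_adj_of_ne hconn (fun a ha => ?_) (fun a ha => ?_)
  · obtain ⟨l, i, hl, hi, rfl⟩ : ∃ l i, l ≤ m ∧ i ≤ k ∧ a = l + i :=
      ⟨min a m, a - min a m, by omega, by omega, by omega⟩
    have := hS l hl i (by omega) (i + 1) (by omega)
    exact dist_eq_one_iff_adj.1 (by simp only [← add_assoc] at this; omega)
  · obtain ⟨l, i, hl, hi, rfl⟩ : ∃ l i, l ≤ m ∧ i + 1 ≤ k ∧ a = l + i :=
      ⟨min a m, a - min a m, by omega, by omega, by omega⟩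
    intro h
    have := hS l hl (i + 2) (by omega) i (by omega)
    simp only [← add_assoc, h, dist_self] at this
    omega

lemma isSegment_iff_isSegmentUpTo {S : ℕ → V} {n : ℕ} :
    IsSegment G (fun i : Fin (n + 1) => S i) ↔ IsSegmentUpTo G S n :=
  ⟨fun h i hi j hj => h ⟨i, by omega⟩ ⟨j, by omega⟩, fun h i j => h i (by omega) j (by omega)⟩

lemma IsSegment.comp_castSucc {n : ℕ} {s : Fin (n + 2) → V} (hs : IsSegment G s) :
    IsSegment G (s ∘ Fin.castSucc) :=
  fun i j => hs i.castSucc j.castSucc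

lemma IsSegment.map_iso (hconn : G.Connected) (e : G ≃g G) {n : ℕ} {s : Fin (n + 1) → V}
    (hs : IsSegment G s) : IsSegment G (e ∘ s) :=
  fun i j => ((hconn _ _).dist_iso e).trans (hs i j)

lemma orbRel_equivalence {n : ℕ} : Equivalence (OrbRel (G := G) Γ (n := n)) where
  refl _ := ⟨1, Γ.one_mem, fun _ => rfl⟩
  symm := fun ⟨g, hg, h⟩ => ⟨g⁻¹, Γ.inv_mem hg, fun i => by simp [← h i]⟩
  trans := fun ⟨g, hg, h⟩ ⟨g', hg', h'⟩ => ⟨g' * g, Γ.mul_mem hg' hg, fun i => by simp [h, h']⟩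

lemma quot_mk_eq_iff_orbRel {n : ℕ} {s t : Seg G n} :
    Quot.mk (OrbRel Γ) s = Quot.mk (OrbRel Γ) t ↔ OrbRel Γ s t :=
  Quot.eq.trans orbRel_equivalence.eqvGen_iff

lemma Mrel.exists_overlap (hconn : G.Connected)
    (hAut : ∀ g ∈ Γ, ∀ u v : V, G.Adj (g u) (g v) ↔ G.Adj u v) {k : ℕ}
    {b : Alphabet G Γ k} {s : Seg G (k + 1)} (h : Mrel G Γ b (Quot.mk _ s)) :
    ∃ t : Seg G (k + 1), Quot.mk _ t = b ∧ ∀ j : Fin (k + 1), t.1 j.castSucc = s.1 j.succ := by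
  obtain ⟨σ, τ, hσ, rfl, hτσ⟩ := h
  obtain ⟨g, hg, hgσ⟩ := quot_mk_eq_iff_orbRel.1 hσ
  exact ⟨⟨g ∘ τ.1, τ.2.map_iso hconn ⟨g, hAut g hg _ _⟩⟩, (Quot.sound ⟨g, hg, fun _ => rfl⟩).symm,
    fun j => by simp [hτσ, hgσ]⟩

variable {m k : ℕ}

lemma admissible_wordOf (σ : Seg G (m + k + 1)) : Admissible G Γ (wordOf G Γ m k σ) :=
  fun j => ⟨_, _, rfl, rfl, fun i => congrArg σ.1 (Fin.ext (by simp; omega))⟩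

lemma eq_of_subseg_zero_eq_of_wordOf_eq
    (hacylk : ∀ g ∈ Γ, ∀ s : Fin (k + 1) → V, IsSegment G s → (∀ i, g (s i) = s i) → g = 1)
    {σ τ : Seg G (m + k + 1)} (h0 : subseg G m k σ 0 = subseg G m k τ 0)
    (hw : wordOf G Γ m k σ = wordOf G Γ m k τ) : σ = τ := by
  suffices ∀ n (hn : n < m + k + 2), σ.1 ⟨n, hn⟩ = τ.1 ⟨n, hn⟩ from
    Subtype.ext (funext fun i => this i i.2)
  intro n
  induction n using Nat.strong_induction_on with | _ n ih =>
  intro hn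
  by_cases hsmall : n ≤ k + 1
  · exact congrArg (fun s : Seg G (k + 1) => s.1 ⟨n, by omega⟩) h0
  obtain ⟨j, rfl⟩ : ∃ j, n = k + 1 + j := ⟨n - (k + 1), by omega⟩
  obtain ⟨g, hg, hgστ⟩ := quot_mk_eq_iff_orbRel.1 (congrFun hw ⟨j, by omega⟩)
  have hg1 : g = 1 := hacylk g hg _ (subseg G m k σ ⟨j, by omega⟩).2.comp_castSucc
    fun i => (hgστ i.castSucc).trans (ih (i + j) (by omega) _).symm
  have hlast := hgστ (Fin.last (k + 1))
  rw [hg1, Equiv.Perm.one_apply] at hlast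
  exact hlast

lemma exists_seg_of_admissible (hconn : G.Connected) (hacyc : G.IsAcyclic)
    (hAut : ∀ g ∈ Γ, ∀ u v : V, G.Adj (g u) (g v) ↔ G.Adj u v) (hk : 1 ≤ k)
    {d : Seg G (k + 1)} {w : Fin (m + 1) → Alphabet G Γ k} (hw : Admissible G Γ w)
    (hw0 : w 0 = Quot.mk _ d) :
    ∃ σ : Seg G (m + k + 1), subseg G m k σ 0 = d ∧ wordOf G Γ m k σ = w := by
  obtain ⟨f, hf0, hfw, hfO⟩ := exists_chain_lift (fun s => (Quot.mk _ s : Alphabet G Γ k))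
    (R := fun a b => Mrel G Γ b a)
    (O := fun s t : Seg G (k + 1) => ∀ i : Fin (k + 1), t.1 i.castSucc = s.1 i.succ)
    (fun _ _ h => h.exists_overlap hconn hAut) (fun j => w (Fin.clamp j m)) m
    (fun j hj => by simpa [Fin.clamp_eq_mk hj.le, Fin.clamp_eq_mk hj] using hw ⟨j, hj⟩) d
    (by rw [Fin.clamp_eq_mk (Nat.zero_le m)]; exact hw0.symm)
  obtain ⟨S, hS⟩ := exists_seq_of_overlapping_windows (fun l => (f l).1) hfO
  have hSseg : IsSegmentUpTo G S (m + k + 1) := hacyc.isSegmentUpTo_of_windows hconn hk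
    fun l hl => isSegment_iff_isSegmentUpTo.1 (by simpa [funext (hS l hl)] using (f l).2)
  let σ : Seg G (m + k + 1) := ⟨fun i => S i, isSegment_iff_isSegmentUpTo.2 hSseg⟩
  have hsub : ∀ j : Fin (m + 1), subseg G m k σ j = f j := fun j =>
    Subtype.ext (funext fun i => ((hS j (by omega) i).trans (congrArg S (add_comm _ _))).symm)
  refine ⟨σ, (hsub 0).trans hf0, funext fun j => ?_⟩
  have hfj := hfw j (by omega)
  rw [Fin.clamp_eq_mk (Nat.le_of_lt_succ j.2)] at hfj
  exact (congrArg (Quot.mk _) (hsub j)).trans hfj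

end

theorem alphabar_bijection_general {V : Type*} (G : SimpleGraph V)
    (hconn : G.Connected) (hacyc : G.IsAcyclic)
    (Γ : Subgroup (Equiv.Perm V))
    (hAut : ∀ g ∈ Γ, ∀ u v : V, G.Adj (g u) (g v) ↔ G.Adj u v)
    (k : ℕ) (hk : 1 ≤ k)
    (hacylk : ∀ g ∈ Γ, ∀ s : Fin (k + 1) → V, IsSegment G s → (∀ i, g (s i) = s i) → g = 1)
    (P : V) (m : ℕ) :
    (∀ σ : Seg G (m + k + 1), σ.1 0 = P →
      (subseg G m k σ 0).1 0 = P ∧ Admissible G Γ (wordOf G Γ m k σ) ∧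
        wordOf G Γ m k σ 0 = Quot.mk _ (subseg G m k σ 0)) ∧
    (∀ σ τ : Seg G (m + k + 1), σ.1 0 = P → τ.1 0 = P →
      subseg G m k σ 0 = subseg G m k τ 0 → wordOf G Γ m k σ = wordOf G Γ m k τ → σ = τ) ∧
    (∀ d : Seg G (k + 1), d.1 0 = P → ∀ w : Fin (m + 1) → Alphabet G Γ k,
      Admissible G Γ w → w 0 = Quot.mk _ d →
      ∃ σ : Seg G (m + k + 1), σ.1 0 = P ∧ subseg G m k σ 0 = d ∧ wordOf G Γ m k σ = w) := by
  refine ⟨fun σ hσ => ⟨hσ, admissible_wordOf σ, rfl⟩,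
    fun σ τ _ _ h0 hw => eq_of_subseg_zero_eq_of_wordOf_eq hacylk h0 hw, fun d hd w hw hw0 => ?_⟩
  obtain ⟨σ, h0, hσw⟩ := exists_seg_of_admissible hconn hacyc hAut hk hw hw0
  exact ⟨σ, (congrArg (fun s : Seg G (k + 1) => s.1 0) h0).trans hd, h0, hσw⟩

/-- Lemma 2 of the paper. Let `Δ` be a locally finite tree,
`Γ ≤ Aut(Δ)` a `k`-acylindrical subgroup (`k ≥ 1`), and fix a vertex `P`. For every `m ≥ 0`,
the map `ᾱ(σ) = (o(σ), α(Γσ))`, where `o(σ)` is the initial subsegment of length `k+1`,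
is a bijection from the directed segments of length `m+k+1` starting at `P` onto the set
`W̄_m = {(d, w) ∈ D × W_m : o(w) = δ(d)}` of decorated words of length `m+1`:
it takes values in `W̄_m`, is injective, and is surjective. -/
theorem alphabar_bijection {V : Type*} (G : SimpleGraph V)
    (hconn : G.Connected) (hacyc : G.IsAcyclic) (hlf : G.LocallyFinite)
    (Γ : Subgroup (Equiv.Perm V))
    (hAut : ∀ g ∈ Γ, ∀ u v : V, G.Adj (g u) (g v) ↔ G.Adj u v)
    (k : ℕ) (hk : 1 ≤ k)
    (hacylk : ∀ g ∈ Γ, ∀ s : Fin (k + 1) → V, IsSegment G s → (∀ i, g (s i) = s i) → g = 1)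
    (P : V) (m : ℕ) :
    (∀ σ : Seg G (m + k + 1), σ.1 0 = P →
      (subseg G m k σ 0).1 0 = P ∧ Admissible G Γ (wordOf G Γ m k σ) ∧
        wordOf G Γ m k σ 0 = Quot.mk _ (subseg G m k σ 0)) ∧
    (∀ σ τ : Seg G (m + k + 1), σ.1 0 = P → τ.1 0 = P →
      subseg G m k σ 0 = subseg G m k τ 0 → wordOf G Γ m k σ = wordOf G Γ m k τ → σ = τ) ∧
    (∀ d : Seg G (k + 1), d.1 0 = P → ∀ w : Fin (m + 1) → Alphabet G Γ k,
      Admissible G Γ w → w 0 = Quot.mk _ d →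
      ∃ σ : Seg G (m + k + 1), σ.1 0 = P ∧ subseg G m k σ 0 = d ∧ wordOf G Γ m k σ = w) :=
  alphabar_bijection_general G hconn hacyc Γ hAut k hk hacylk P m
end

section
/- Let l, m ≥ 1 be integers with lm ≥ 2. Let F be the free abelian group on the disjoint union A₁ ⊔ A₂ of two finite sets with |A₁| = l and |A₂| = m, and let R ≤ F be the subgroup generated by the elements a − Σ_{b∈A₂} b for a ∈ A₁ together with the elements a − Σ_{b∈A₁} b for a ∈ A₂. Then F/R is a cyclic group of order lm − 1, and the image in F/R of any element of A₁ generates F/R. (This computes the K-theory group 𝒢_Γ = K₀(𝒜_Γ) ≅ ℤ_{lm−1} for the free product Γ = ℤ_{l+1} * ℤ_{m+1} acting on its Bass–Serre tree.) -/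
/-!
In the quotient, every `b ∈ A₂` becomes `g = Σ_{a ∈ A₁} a`, hence every `a ∈ A₁` becomes `m • g`,
and then `g = Σ_a m • g = (l m) • g`. So the quotient is cyclic, generated by `g`, and killed by
`l m - 1`. Conversely the weights `a ↦ m`, `b ↦ 1` kill the relations modulo `l m - 1` and send
`g` to `l m = 1`, which gives the inverse isomorphism. Finally `g = l • (m • g)` lies in the
subgroup generated by the image of any `a ∈ A₁`.
-/

noncomputable section

namespace KTheoryFreeProduct

open Finsupp

variable (A₁ A₂ : Type*) [Fintype A₁] [Fintype A₂]

def relations : AddSubgroup ((A₁ ⊕ A₂) →₀ ℤ) :=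
  AddSubgroup.closure
    ((Set.range fun a : A₁ => single (Sum.inl a) (1 : ℤ) - ∑ b : A₂, single (Sum.inr b) (1 : ℤ)) ∪
     (Set.range fun b : A₂ => single (Sum.inr b) (1 : ℤ) - ∑ a : A₁, single (Sum.inl a) (1 : ℤ)))

abbrev KGroup : Type _ := ((A₁ ⊕ A₂) →₀ ℤ) ⧸ relations A₁ A₂

def generator : KGroup A₁ A₂ :=
  ∑ a : A₁, ((single (Sum.inl a) 1 : (A₁ ⊕ A₂) →₀ ℤ) : KGroup A₁ A₂)

variable {A₁ A₂}

lemma mk_single_inl_eq_sum (a : A₁) :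
    ((single (Sum.inl a) 1 : (A₁ ⊕ A₂) →₀ ℤ) : KGroup A₁ A₂) =
      ∑ b : A₂, ((single (Sum.inr b) 1 : (A₁ ⊕ A₂) →₀ ℤ) : KGroup A₁ A₂) := by
  rw [← QuotientAddGroup.mk_sum, QuotientAddGroup.eq_iff_sub_mem]
  exact AddSubgroup.subset_closure (Or.inl ⟨a, rfl⟩)

lemma mk_single_inr (b : A₂) :
    ((single (Sum.inr b) 1 : (A₁ ⊕ A₂) →₀ ℤ) : KGroup A₁ A₂) = generator A₁ A₂ := by
  rw [generator, ← QuotientAddGroup.mk_sum, QuotientAddGroup.eq_iff_sub_mem]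
  exact AddSubgroup.subset_closure (Or.inr ⟨b, rfl⟩)

lemma mk_single_inl (a : A₁) :
    ((single (Sum.inl a) 1 : (A₁ ⊕ A₂) →₀ ℤ) : KGroup A₁ A₂) =
      Fintype.card A₂ • generator A₁ A₂ := by
  simp only [mk_single_inl_eq_sum, mk_single_inr, Finset.sum_const, Finset.card_univ]

lemma card_mul_card_nsmul_generator :
    (Fintype.card A₁ * Fintype.card A₂) • generator A₁ A₂ = generator A₁ A₂ := by
  conv_rhs => rw [generator]
  simp only [mk_single_inl, Finset.sum_const, Finset.card_univ, mul_nsmul']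

lemma card_mul_card_sub_one_zsmul_generator :
    ((Fintype.card A₁ * Fintype.card A₂ - 1 : ℕ) : ℤ) • generator A₁ A₂ = 0 := by
  rw [natCast_zsmul]
  rcases Nat.eq_zero_or_pos (Fintype.card A₁ * Fintype.card A₂) with h | h
  · rw [h, zero_tsub, zero_nsmul]
  · have := card_mul_card_nsmul_generator (A₁ := A₁) (A₂ := A₂)
    rwa [← Nat.sub_add_cancel h, succ_nsmul, add_eq_right] at this

def weight : A₁ ⊕ A₂ → ZMod (Fintype.card A₁ * Fintype.card A₂ - 1) :=
  Sum.elim (fun _ => Fintype.card A₂) (fun _ => 1)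

def ofZMod : ZMod (Fintype.card A₁ * Fintype.card A₂ - 1) →+ KGroup A₁ A₂ :=
  ZMod.lift _ ⟨zmultiplesHom _ (generator A₁ A₂), card_mul_card_sub_one_zsmul_generator⟩

lemma ofZMod_intCast (z : ℤ) : ofZMod (z : ZMod _) = z • generator A₁ A₂ :=
  ZMod.lift_coe _ _ z

lemma ofZMod_weight (x : A₁ ⊕ A₂) :
    ofZMod (weight x) = ((single x 1 : (A₁ ⊕ A₂) →₀ ℤ) : KGroup A₁ A₂) := by
  rcases x with a | b
  · simpa [weight, mk_single_inl] using ofZMod_intCast (Fintype.card A₂ : ℤ)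
  · simpa [weight, mk_single_inr] using ofZMod_intCast 1

variable [Nonempty A₁] [Nonempty A₂]

lemma relations_le_ker_weight :
    relations A₁ A₂ ≤ (linearCombination ℤ (weight (A₁ := A₁) (A₂ := A₂))).toAddMonoidHom.ker := by
  have hcard : (Fintype.card A₁ : ZMod (Fintype.card A₁ * Fintype.card A₂ - 1)) *
      Fintype.card A₂ = 1 := by
    have : 1 ≤ Fintype.card A₁ * Fintype.card A₂ := Nat.mul_pos Fintype.card_pos Fintype.card_pos
    rw [← Nat.cast_mul, ← Nat.sub_add_cancel this, Nat.cast_add, ZMod.natCast_self, zero_add,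
      Nat.cast_one]
  rw [relations, AddSubgroup.closure_le]
  rintro _ (⟨a, rfl⟩ | ⟨b, rfl⟩) <;>
    simp [weight, hcard]

def toZMod : KGroup A₁ A₂ →+ ZMod (Fintype.card A₁ * Fintype.card A₂ - 1) :=
  QuotientAddGroup.lift _ _ relations_le_ker_weight

lemma toZMod_generator : toZMod (generator A₁ A₂) = 1 := by
  obtain ⟨b⟩ := ‹Nonempty A₂›
  rw [← mk_single_inr b]
  simp [toZMod, weight]

lemma ofZMod_comp_toZMod : ofZMod.comp toZMod = AddMonoidHom.id (KGroup A₁ A₂) := by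
  refine QuotientAddGroup.addMonoidHom_ext _ (Finsupp.addHom_ext' fun x => ?_)
  ext
  simp [toZMod, ofZMod_weight]

lemma toZMod_comp_ofZMod :
    toZMod.comp ofZMod = AddMonoidHom.id (ZMod (Fintype.card A₁ * Fintype.card A₂ - 1)) := by
  ext x
  obtain ⟨z, rfl⟩ := ZMod.intCast_surjective x
  simp [ofZMod_intCast, toZMod_generator]

def equivZMod : KGroup A₁ A₂ ≃+ ZMod (Fintype.card A₁ * Fintype.card A₂ - 1) :=
  AddMonoidHom.toAddEquiv toZMod ofZMod ofZMod_comp_toZMod toZMod_comp_ofZMod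

lemma zmultiples_generator_eq_top : AddSubgroup.zmultiples (generator A₁ A₂) = ⊤ := by
  refine eq_top_iff.2 fun x _ => ?_
  obtain ⟨z, hz⟩ := ZMod.intCast_surjective (equivZMod x)
  rw [← equivZMod.symm_apply_apply x, ← hz]
  exact ⟨z, (ofZMod_intCast z).symm⟩

lemma closure_mk_single_inl_eq_top (a : A₁) :
    AddSubgroup.closure {((single (Sum.inl a) 1 : (A₁ ⊕ A₂) →₀ ℤ) : KGroup A₁ A₂)} = ⊤ := by
  have hgen : generator A₁ A₂ = Fintype.card A₁ • (single (Sum.inl a) 1 : (A₁ ⊕ A₂) →₀ ℤ) := by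
    rw [mk_single_inl, smul_smul, card_mul_card_nsmul_generator]
  rw [← AddSubgroup.zmultiples_eq_closure, eq_top_iff, ← zmultiples_generator_eq_top,
    AddSubgroup.zmultiples_le, hgen]
  exact AddSubgroup.nsmul_mem _ (AddSubgroup.mem_zmultiples _) _

end KTheoryFreeProduct

end

open KTheoryFreeProduct in
theorem K_theory_free_product_two_general {l m : ℕ} (hl : 1 ≤ l) (hm : 1 ≤ m)
    (A₁ A₂ : Type) [Fintype A₁] [Fintype A₂]
    (hcard₁ : Fintype.card A₁ = l) (hcard₂ : Fintype.card A₂ = m)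
    (R : AddSubgroup ((A₁ ⊕ A₂) →₀ ℤ))
    (hR : R = AddSubgroup.closure
      ((Set.range fun a : A₁ =>
          Finsupp.single (Sum.inl a) (1 : ℤ) - ∑ b : A₂, Finsupp.single (Sum.inr b) (1 : ℤ)) ∪
       (Set.range fun a : A₂ =>
          Finsupp.single (Sum.inr a) (1 : ℤ) - ∑ b : A₁, Finsupp.single (Sum.inl b) (1 : ℤ)))) :
    Nonempty ((((A₁ ⊕ A₂) →₀ ℤ) ⧸ R) ≃+ ZMod (l * m - 1)) ∧
    ∀ a : A₁, AddSubgroup.closure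
      {(QuotientAddGroup.mk (Finsupp.single (Sum.inl a) (1 : ℤ)) : ((A₁ ⊕ A₂) →₀ ℤ) ⧸ R)} = ⊤ := by
  subst hcard₁ hcard₂ hR
  have : Nonempty A₁ := Fintype.card_pos_iff.mp hl
  have : Nonempty A₂ := Fintype.card_pos_iff.mp hm
  exact ⟨⟨equivZMod⟩, closure_mk_single_inl_eq_top⟩

/-- Let `l, m ≥ 1` with `lm ≥ 2`. Let `F` be the free abelian group on
`A₁ ⊔ A₂` with `|A₁| = l`, `|A₂| = m`, and let `R ≤ F` be the subgroup generated by the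
elements `a - Σ_{b ∈ A₂} b` for `a ∈ A₁` and `a - Σ_{b ∈ A₁} b` for `a ∈ A₂`. Then `F/R`
is cyclic of order `lm - 1`, generated by the image of any element of `A₁`.
(This computes `K₀(𝒜_Γ) ≅ ℤ_{lm-1}` for `Γ = ℤ_{l+1} * ℤ_{m+1}`.) -/
theorem K_theory_free_product_two {l m : ℕ} (hl : 1 ≤ l) (hm : 1 ≤ m) (hlm : 2 ≤ l * m)
    (A₁ A₂ : Type) [Fintype A₁] [Fintype A₂]
    (hcard₁ : Fintype.card A₁ = l) (hcard₂ : Fintype.card A₂ = m)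
    (R : AddSubgroup ((A₁ ⊕ A₂) →₀ ℤ))
    (hR : R = AddSubgroup.closure
      ((Set.range fun a : A₁ =>
          Finsupp.single (Sum.inl a) (1 : ℤ) - ∑ b : A₂, Finsupp.single (Sum.inr b) (1 : ℤ)) ∪
       (Set.range fun a : A₂ =>
          Finsupp.single (Sum.inr a) (1 : ℤ) - ∑ b : A₁, Finsupp.single (Sum.inl b) (1 : ℤ)))) :
    Nonempty ((((A₁ ⊕ A₂) →₀ ℤ) ⧸ R) ≃+ ZMod (l * m - 1)) ∧
    ∀ a : A₁, AddSubgroup.closure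
      {(QuotientAddGroup.mk (Finsupp.single (Sum.inl a) (1 : ℤ)) : ((A₁ ⊕ A₂) →₀ ℤ) ⧸ R)} = ⊤ :=
  K_theory_free_product_two_general hl hm A₁ A₂ hcard₁ hcard₂ R hR
end

section
/- Let n ≥ 2 be an integer and let γ₁, …, γₙ ≥ 1 be integers. Let F be the free abelian group on the disjoint union (A₁ ⊔ ⋯ ⊔ Aₙ) ⊔ B, where A₁, …, Aₙ are finite sets with |Aᵢ| = γᵢ and B = {b_{jk} : 1 ≤ j, k ≤ n, j ≠ k}, and let R ≤ F be the subgroup generated by the elements a − Σ_{j≠i} b_{ij} for a ∈ Aᵢ (1 ≤ i ≤ n) together with the elements b_{jk} − Σ_{a∈A_k} a for j ≠ k. Let G be the quotient of the free abelian group ℤⁿ with basis e₁, …, eₙ by the subgroup generated by the elements eᵢ − Σ_{j≠i} γⱼ eⱼ (1 ≤ i ≤ n). Then F/R is isomorphic to G. (This is the reduction of presentation (Ka2) to presentation (Ka3) for the K-theory of the boundary algebra of a free product Γ₁ * ⋯ * Γₙ of finite groups with |Γᵢ| = γᵢ + 1.) -/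
set_option linter.unusedSectionVars false
set_option maxHeartbeats 1000000

namespace Ka2Ka3Aux
variable (n : ℕ) (γ : Fin n → ℕ) (A : Fin n → Type) [∀ i, Fintype (A i)]

abbrev XX := (Σ i : Fin n, A i) ⊕ {p : Fin n × Fin n // p.1 ≠ p.2}

noncomputable def SF : Set ((XX n A) →₀ ℤ) :=
  (⋃ i : Fin n, Set.range fun a : A i =>
      Finsupp.single (Sum.inl ⟨i, a⟩) (1 : ℤ) -
        ∑ j : {j : Fin n // j ≠ i},
          Finsupp.single (Sum.inr ⟨(i, (j : Fin n)), Ne.symm j.2⟩) (1 : ℤ)) ∪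
   (Set.range fun b : {p : Fin n × Fin n // p.1 ≠ p.2} =>
      Finsupp.single (Sum.inr b) (1 : ℤ) -
        ∑ a : A b.1.2, Finsupp.single (Sum.inl ⟨b.1.2, a⟩) (1 : ℤ))

noncomputable def SG : Set (Fin n → ℤ) :=
  Set.range fun i : Fin n =>
    Pi.single i (1 : ℤ) -
      ∑ j : {j : Fin n // j ≠ i}, (γ (j : Fin n) : ℤ) • Pi.single (j : Fin n) (1 : ℤ)

noncomputable abbrev RF := AddSubgroup.closure (SF n A)
noncomputable abbrev RG := AddSubgroup.closure (SG n γ)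

noncomputable def phi0 : XX n A → (Fin n → ℤ)
  | Sum.inl s => Pi.single s.1 (1 : ℤ)
  | Sum.inr b => (γ b.1.2 : ℤ) • Pi.single b.1.2 (1 : ℤ)

noncomputable def fmap : ((XX n A) →₀ ℤ) →+ (Fin n → ℤ) :=
  Finsupp.liftAddHom fun x => zmultiplesHom _ (phi0 n γ A x)

lemma fmap_single (x : XX n A) (m : ℤ) :
    fmap n γ A (Finsupp.single x m) = m • phi0 n γ A x := by
  simp [fmap]

noncomputable abbrev qF : ((XX n A) →₀ ℤ) →+ ((XX n A) →₀ ℤ) ⧸ RF n A :=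
  QuotientAddGroup.mk' (RF n A)

lemma qF_rel (s : ((XX n A) →₀ ℤ)) (hs : s ∈ SF n A) : qF n A s = 0 :=
  (QuotientAddGroup.eq_zero_iff s).mpr (AddSubgroup.subset_closure hs)

noncomputable def tmap (i : Fin n) : ((XX n A) →₀ ℤ) ⧸ RF n A :=
  ∑ j : {j : Fin n // j ≠ i},
    qF n A (Finsupp.single (Sum.inr ⟨(i, (j : Fin n)), Ne.symm j.2⟩) (1 : ℤ))

lemma qF_A (i : Fin n) (a : A i) :
    qF n A (Finsupp.single (Sum.inl ⟨i, a⟩) (1 : ℤ)) = tmap n A i := by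
  have h := qF_rel n A _ (Set.mem_union_left _
    (Set.mem_iUnion.mpr ⟨i, Set.mem_range.mpr ⟨a, rfl⟩⟩))
  rw [map_sub, sub_eq_zero] at h
  rw [h, map_sum, tmap]

variable (hcard : ∀ i, Fintype.card (A i) = γ i)

include hcard in
lemma qF_B (b : {p : Fin n × Fin n // p.1 ≠ p.2}) :
    qF n A (Finsupp.single (Sum.inr b) (1 : ℤ)) = (γ b.1.2 : ℤ) • tmap n A b.1.2 := by
  have h := qF_rel n A _ (Set.mem_union_right _ (Set.mem_range.mpr ⟨b, rfl⟩))
  rw [map_sub, sub_eq_zero] at h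
  rw [h, map_sum]
  have h2 : ∀ a : A b.1.2, qF n A (Finsupp.single (Sum.inl ⟨b.1.2, a⟩) (1 : ℤ))
      = tmap n A b.1.2 := fun a => qF_A n A _ a
  rw [Finset.sum_congr rfl fun a _ => h2 a, Finset.sum_const, Finset.card_univ, hcard,
    natCast_zsmul]

include hcard in
lemma tmap_rel (i : Fin n) :
    tmap n A i = ∑ j : {j : Fin n // j ≠ i}, (γ (j : Fin n) : ℤ) • tmap n A (j : Fin n) := by
  rw [tmap]
  exact Finset.sum_congr rfl fun j _ => qF_B n γ A hcard _

noncomputable def gmap : (Fin n → ℤ) →+ ((XX n A) →₀ ℤ) ⧸ RF n A :=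
  ∑ i : Fin n, (zmultiplesHom _ (tmap n A i)).comp (Pi.evalAddMonoidHom (fun _ => ℤ) i)

lemma gmap_single (i : Fin n) (m : ℤ) :
    gmap n A (Pi.single i m) = m • tmap n A i := by
  classical
  rw [gmap]
  simp only [AddMonoidHom.finset_sum_apply, AddMonoidHom.coe_comp, Function.comp_apply,
    Pi.evalAddMonoidHom_apply, zmultiplesHom_apply]
  rw [Finset.sum_eq_single i]
  · simp
  · intro j _ hj; simp [Pi.single_apply, hj]
  · simp

include hcard in
lemma fmap_SF (s : ((XX n A) →₀ ℤ)) (hs : s ∈ SF n A) :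
    (QuotientAddGroup.mk' (RG n γ)) (fmap n γ A s) = 0 := by
  rw [QuotientAddGroup.mk'_apply, QuotientAddGroup.eq_zero_iff]
  rcases hs with hs | hs
  · rw [Set.mem_iUnion] at hs
    obtain ⟨i, a, rfl⟩ := hs
    apply AddSubgroup.subset_closure
    have key : fmap n γ A (Finsupp.single (Sum.inl (⟨i, a⟩ : Σ i, A i)) (1 : ℤ) -
        ∑ j : {j : Fin n // j ≠ i},
          Finsupp.single (Sum.inr ⟨(i, (j : Fin n)), Ne.symm j.2⟩) (1 : ℤ))
        = Pi.single i (1 : ℤ) -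
          ∑ j : {j : Fin n // j ≠ i}, (γ (j : Fin n) : ℤ) • Pi.single (j : Fin n) (1 : ℤ) := by
      simp only [map_sub, map_sum, fmap_single, one_zsmul]
      rfl
    exact ⟨i, key.symm⟩
  · obtain ⟨b, rfl⟩ := hs
    have key : fmap n γ A (Finsupp.single (Sum.inr b) (1 : ℤ) -
        ∑ a : A b.1.2, Finsupp.single (Sum.inl ⟨b.1.2, a⟩) (1 : ℤ)) = 0 := by
      simp only [map_sub, map_sum, fmap_single, one_zsmul]
      have h2 : ∀ a : A b.1.2, phi0 n γ A (Sum.inl ⟨b.1.2, a⟩)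
          = Pi.single b.1.2 (1 : ℤ) := fun a => rfl
      rw [Finset.sum_congr rfl fun a _ => h2 a, Finset.sum_const, Finset.card_univ, hcard,
        show phi0 n γ A (Sum.inr b) = (γ b.1.2 : ℤ) • Pi.single b.1.2 (1 : ℤ) from rfl,
        natCast_zsmul, sub_self]
    rw [key]
    exact zero_mem _

include hcard in
lemma gmap_SG (v : Fin n → ℤ) (hv : v ∈ SG n γ) : gmap n A v = 0 := by
  obtain ⟨i, rfl⟩ := hv
  rw [map_sub, map_sum, gmap_single, one_zsmul, sub_eq_zero, tmap_rel n γ A hcard i]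
  exact Finset.sum_congr rfl fun j _ => by rw [map_zsmul, gmap_single, one_zsmul]

end Ka2Ka3Aux

open Ka2Ka3Aux in
/-- Reduction of the presentation (Ka2) to (Ka3): the free abelian group on
`(A₁ ⊔ ⋯ ⊔ Aₙ) ⊔ B`, `B = {b_{jk} : j ≠ k}`, modulo the relations `a = Σ_{j≠i} b_{ij}`
(`a ∈ Aᵢ`) and `b_{jk} = Σ_{a ∈ A_k} a`, is isomorphic to `ℤⁿ` modulo the relations
`eᵢ = Σ_{j≠i} γⱼ eⱼ`, where `|Aᵢ| = γᵢ`. -/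
theorem Ka2_iso_Ka3 (n : ℕ) (hn : 2 ≤ n) (γ : Fin n → ℕ) (hγ : ∀ i, 1 ≤ γ i)
    (A : Fin n → Type) [∀ i, Fintype (A i)] (hcard : ∀ i, Fintype.card (A i) = γ i) :
    Nonempty (
      ((((Σ i : Fin n, A i) ⊕ {p : Fin n × Fin n // p.1 ≠ p.2}) →₀ ℤ) ⧸
        AddSubgroup.closure
          ((⋃ i : Fin n, Set.range fun a : A i =>
              Finsupp.single (Sum.inl ⟨i, a⟩) (1 : ℤ) -
                ∑ j : {j : Fin n // j ≠ i},
                  Finsupp.single (Sum.inr ⟨(i, (j : Fin n)), Ne.symm j.2⟩) (1 : ℤ)) ∪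
           (Set.range fun b : {p : Fin n × Fin n // p.1 ≠ p.2} =>
              Finsupp.single (Sum.inr b) (1 : ℤ) -
                ∑ a : A b.1.2, Finsupp.single (Sum.inl ⟨b.1.2, a⟩) (1 : ℤ)))) ≃+
      ((Fin n → ℤ) ⧸
        AddSubgroup.closure (Set.range fun i : Fin n =>
          Pi.single i (1 : ℤ) -
            ∑ j : {j : Fin n // j ≠ i}, (γ (j : Fin n) : ℤ) • Pi.single (j : Fin n) (1 : ℤ)))) := by
  classical
  constructor
  let fq : ((XX n A) →₀ ℤ) →+ ((Fin n → ℤ) ⧸ RG n γ) :=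
    (QuotientAddGroup.mk' (RG n γ)).comp (fmap n γ A)
  have hfker : RF n A ≤ fq.ker := (AddSubgroup.closure_le _).mpr
    (fun s hs => fmap_SF n γ A hcard s hs)
  let fbar : (((XX n A) →₀ ℤ) ⧸ RF n A) →+ ((Fin n → ℤ) ⧸ RG n γ) :=
    QuotientAddGroup.lift (RF n A) fq hfker
  have hgker : RG n γ ≤ (gmap n A).ker := (AddSubgroup.closure_le _).mpr
    (fun v hv => gmap_SG n γ A hcard v hv)
  let gbar : ((Fin n → ℤ) ⧸ RG n γ) →+ (((XX n A) →₀ ℤ) ⧸ RF n A) :=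
    QuotientAddGroup.lift (RG n γ) (gmap n A) hgker
  refine AddMonoidHom.toAddEquiv fbar gbar ?_ ?_
  · -- gbar ∘ fbar = id
    refine QuotientAddGroup.addMonoidHom_ext _ (Finsupp.addHom_ext fun x m => ?_)
    simp only [AddMonoidHom.coe_comp, Function.comp_apply, AddMonoidHom.id_apply]
    have key : gbar (fq (Finsupp.single x 1)) = qF n A (Finsupp.single x 1) := by
      have hfq : fq (Finsupp.single x 1) = QuotientAddGroup.mk' (RG n γ) (phi0 n γ A x) := by
        show QuotientAddGroup.mk' (RG n γ) (fmap n γ A (Finsupp.single x 1)) = _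
        rw [fmap_single, one_zsmul]
      rw [hfq]
      show gmap n A (phi0 n γ A x) = qF n A (Finsupp.single x 1)
      rcases x with ⟨i, a⟩ | b
      · rw [qF_A n A i a]
        show gmap n A (Pi.single i 1) = tmap n A i
        rw [gmap_single, one_zsmul]
      · rw [qF_B n γ A hcard b]
        show gmap n A ((γ b.1.2 : ℤ) • Pi.single b.1.2 (1 : ℤ)) = _
        rw [map_zsmul, gmap_single, one_zsmul]
    have hm : Finsupp.single x m = m • Finsupp.single x (1 : ℤ) := by
      rw [Finsupp.smul_single, smul_eq_mul, mul_one]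
    show gbar (fq (Finsupp.single x m)) = qF n A (Finsupp.single x m)
    calc gbar (fq (Finsupp.single x m)) = m • gbar (fq (Finsupp.single x 1)) := by
          rw [hm, map_zsmul, map_zsmul]
      _ = m • qF n A (Finsupp.single x 1) := by rw [key]
      _ = qF n A (Finsupp.single x m) := by rw [hm, map_zsmul]
  · -- fbar ∘ gbar = id
    refine QuotientAddGroup.addMonoidHom_ext _
      (AddMonoidHom.functions_ext _ _ _ fun i m => ?_)
    simp only [AddMonoidHom.coe_comp, Function.comp_apply, AddMonoidHom.id_apply]
    have key : fbar (gmap n A (Pi.single i (1 : ℤ)))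
        = QuotientAddGroup.mk' (RG n γ) (Pi.single i (1 : ℤ)) := by
      rw [gmap_single, one_zsmul, tmap, map_sum]
      have hstep : ∀ j : {j : Fin n // j ≠ i},
          fbar (qF n A (Finsupp.single (Sum.inr ⟨(i, (j : Fin n)), Ne.symm j.2⟩) (1 : ℤ)))
            = QuotientAddGroup.mk' (RG n γ)
                ((γ (j : Fin n) : ℤ) • Pi.single (j : Fin n) (1 : ℤ)) := by
        intro j
        show QuotientAddGroup.mk' (RG n γ) (fmap n γ A
          (Finsupp.single (Sum.inr ⟨(i, (j : Fin n)), Ne.symm j.2⟩) (1 : ℤ))) = _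
        rw [fmap_single, one_zsmul]
        rfl
      rw [Finset.sum_congr rfl fun j _ => hstep j, ← map_sum, QuotientAddGroup.mk'_eq_mk']
      refine ⟨Pi.single i (1 : ℤ) -
        ∑ j : {j : Fin n // j ≠ i}, (γ (j : Fin n) : ℤ) • Pi.single (j : Fin n) (1 : ℤ),
        AddSubgroup.subset_closure ⟨i, rfl⟩, by abel⟩
    show fbar (gmap n A (Pi.single i m)) = QuotientAddGroup.mk' (RG n γ) (Pi.single i m)
    have hm : (Pi.single i m : Fin n → ℤ) = m • Pi.single i (1 : ℤ) := by
      funext j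
      simp [Pi.single_apply, mul_comm]
    rw [hm, map_zsmul, map_zsmul, map_zsmul, key]
end

section
/- Let n ≥ 2 be an integer and let γ₁, …, γₙ ≥ 1 be integers, and assume that it is not the case that n = 2 and γ₁ = γ₂ = 1. Then the quotient of ℤⁿ by the subgroup generated by the elements eᵢ − Σ_{j≠i} γⱼ eⱼ (1 ≤ i ≤ n) is a finite group; in particular it is a torsion group. (This is the assertion that K₀(𝒜_Γ) is a torsion group, hence K₁(𝒜_Γ) = 0, for a free product of finite groups Γ = Γ₁ * ⋯ * Γₙ with |Γᵢ| = γᵢ + 1 satisfying the standing hypotheses.) -/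
/-- The abelian group `⟨e₁, …, eₙ | eᵢ = Σ_{j≠i} γⱼ eⱼ⟩`, i.e. `ℤⁿ` modulo the subgroup
generated by the elements `eᵢ - Σ_{j≠i} γⱼ eⱼ`. -/
abbrev KGroup (n : ℕ) (γ : Fin n → ℕ) : Type :=
  (Fin n → ℤ) ⧸
    AddSubgroup.closure (Set.range fun i : Fin n =>
      Pi.single i (1 : ℤ) -
        ∑ j : {j : Fin n // j ≠ i}, (γ (j : Fin n) : ℤ) • Pi.single (j : Fin n) (1 : ℤ))

/-! Write `xᵢ` for the image of `eᵢ` and `s = ∑ γⱼ xⱼ`; the relations say `(γᵢ + 1) xᵢ = s`.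
Multiplying `s` by `P = ∏ (γₖ + 1)` and substituting the relations gives `E s = 0`, where
`E = P (∑ γⱼ / (γⱼ + 1) - 1)` is an integer, positive outside the excluded case since each
`γⱼ / (γⱼ + 1) ≥ 1/2`. Hence `P E` kills every `xᵢ`, and a finitely generated torsion abelian
group is finite. -/

open Finset

section Relations

variable {ι R : Type*} [Fintype ι] [DecidableEq ι] [CommRing R]

/-- Up to sign, the determinant of the relation matrix `((1 + a i) δᵢⱼ - a j)ᵢⱼ`; its ratio to
`∏ k, (a k + 1)` is `∑ j, a j / (a j + 1) - 1`. -/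
def relationDefect (a : ι → R) : R :=
  ∑ j, a j * ∏ k ∈ univ.erase j, (a k + 1) - ∏ k, (a k + 1)

theorem two_mul_relationDefect (a : ι → R) :
    2 * relationDefect a = ((Fintype.card ι : R) - 2) * ∏ k, (a k + 1)
      + ∑ j, (a j - 1) * ∏ k ∈ univ.erase j, (a k + 1) := by
  have key : ∀ j, 2 * (a j * ∏ k ∈ univ.erase j, (a k + 1))
      = ∏ k, (a k + 1) + (a j - 1) * ∏ k ∈ univ.erase j, (a k + 1) := by
    intro j
    rw [← mul_prod_erase univ (fun k => a k + 1) (mem_univ j)]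
    ring
  rw [relationDefect, mul_sub, mul_sum, sum_congr rfl fun j _ => key j, sum_add_distrib,
    sum_const, card_univ, nsmul_eq_mul]
  ring

variable {M : Type*} [AddCommGroup M] [Module R M]

theorem relationDefect_smul_eq_zero (a : ι → R) (x : ι → M)
    (h : ∀ i, (a i + 1) • x i = ∑ j, a j • x j) :
    relationDefect a • ∑ j, a j • x j = 0 := by
  have hP : (∏ k, (a k + 1)) • ∑ j, a j • x j
      = (∑ j, a j * ∏ k ∈ univ.erase j, (a k + 1)) • ∑ j, a j • x j := by
    calc (∏ k, (a k + 1)) • ∑ j, a j • x j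
        = ∑ j, (a j * ∏ k ∈ univ.erase j, (a k + 1)) • ((a j + 1) • x j) := by
          rw [smul_sum]
          refine sum_congr rfl fun j _ => ?_
          rw [smul_smul, smul_smul, ← mul_prod_erase univ (fun k => a k + 1) (mem_univ j)]
          congr 1
          ring
      _ = _ := by simp only [h, sum_smul]
  rw [relationDefect, sub_smul, hP, sub_self]

theorem prod_mul_relationDefect_smul_eq_zero (a : ι → R) (x : ι → M)
    (h : ∀ i, (a i + 1) • x i = ∑ j, a j • x j) (i : ι) :
    ((∏ k, (a k + 1)) * relationDefect a) • x i = 0 := by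
  have hsplit : (∏ k, (a k + 1)) * relationDefect a
      = (∏ k ∈ univ.erase i, (a k + 1)) * relationDefect a * (a i + 1) := by
    rw [← mul_prod_erase univ (fun k => a k + 1) (mem_univ i)]
    ring
  rw [hsplit, mul_smul, h, mul_smul, relationDefect_smul_eq_zero a x h, smul_zero]

end Relations

theorem relationDefect_pos {ι R : Type*} [Fintype ι] [DecidableEq ι] [CommRing R] [LinearOrder R]
    [IsStrictOrderedRing R] (a : ι → R) (ha : ∀ i, 1 ≤ a i) (hcard : 2 ≤ Fintype.card ι)
    (hexc : ¬ (Fintype.card ι = 2 ∧ ∀ i, a i = 1)) : 0 < relationDefect a := by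
  have hQ : ∀ j, 0 < ∏ k ∈ univ.erase j, (a k + 1) := fun j =>
    prod_pos fun k _ => by linarith [ha k]
  have hP : 0 < ∏ k, (a k + 1) := prod_pos fun k _ => by linarith [ha k]
  have hterm : ∀ j, 0 ≤ (a j - 1) * ∏ k ∈ univ.erase j, (a k + 1) := fun j =>
    mul_nonneg (by linarith [ha j]) (hQ j).le
  suffices 0 < 2 * relationDefect a by linarith
  rw [two_mul_relationDefect]
  rcases hcard.lt_or_eq with hcard | hcard
  · have hcard' : (0 : R) < (Fintype.card ι : R) - 2 := by
      rw [sub_pos]; exact_mod_cast hcard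
    have hsum := sum_nonneg fun j (_ : j ∈ univ) => hterm j
    nlinarith
  · obtain ⟨i, hi⟩ : ∃ i, a i ≠ 1 := by
      by_contra! h; exact hexc ⟨hcard.symm, h⟩
    have hsum : 0 < ∑ j, (a j - 1) * ∏ k ∈ univ.erase j, (a k + 1) :=
      sum_pos' (fun j _ => hterm j)
        ⟨i, mem_univ i, mul_pos (by linarith [(ha i).lt_of_ne hi.symm]) (hQ i)⟩
    rw [← hcard]; simpa using hsum

theorem QuotientAddGroup.zsmul_eq_zero_of_zsmul_mk_single {ι : Type*} [Fintype ι] [DecidableEq ι]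
    {N : AddSubgroup (ι → ℤ)} {c : ℤ} (hc : ∀ i, c • ((Pi.single i 1 : ι → ℤ) : (ι → ℤ) ⧸ N) = 0)
    (y : (ι → ℤ) ⧸ N) : c • y = 0 := by
  obtain ⟨v, rfl⟩ := QuotientAddGroup.mk_surjective y
  rw [← univ_sum_single v, QuotientAddGroup.mk_sum, ← sum_zsmul]
  refine sum_eq_zero fun i _ => ?_
  rw [← mul_one (v i), ← smul_eq_mul, Pi.single_smul', QuotientAddGroup.mk_zsmul, smul_comm, hc,
    smul_zero]

namespace KGroup

variable {n : ℕ} {γ : Fin n → ℕ}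

theorem succ_smul_mk_single (i : Fin n) :
    ((γ i : ℤ) + 1) • ((Pi.single i 1 : Fin n → ℤ) : KGroup n γ)
      = ∑ j, (γ j : ℤ) • ((Pi.single j 1 : Fin n → ℤ) : KGroup n γ) := by
  have hrel : ((Pi.single i 1 - ∑ j : {j // j ≠ i}, (γ j : ℤ) • Pi.single (j : Fin n) 1 :
      Fin n → ℤ) : KGroup n γ) = 0 :=
    (QuotientAddGroup.eq_zero_iff _).2 (AddSubgroup.subset_closure ⟨i, rfl⟩)
  rw [QuotientAddGroup.mk_sub, sub_eq_zero, QuotientAddGroup.mk_sum] at hrel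
  rw [Fintype.sum_eq_add_sum_subtype_ne _ i, add_one_zsmul, hrel]
  simp only [QuotientAddGroup.mk_zsmul]

theorem isAddTorsion (hn : 2 ≤ n) (hγ : ∀ i, 1 ≤ γ i) (hexc : ¬ (n = 2 ∧ ∀ i, γ i = 1)) :
    IsAddTorsion (KGroup n γ) := by
  set a : Fin n → ℤ := fun i => γ i
  have hE : 0 < relationDefect a :=
    relationDefect_pos a (fun i => by simp [a, hγ i]) (by simpa using hn) (by simpa [a] using hexc)
  have hP : 0 < ∏ k, (a k + 1) := prod_pos fun k _ => by positivity
  refine fun y => isOfFinAddOrder_iff_zsmul_eq_zero.2 ⟨_, (mul_pos hP hE).ne', ?_⟩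
  exact QuotientAddGroup.zsmul_eq_zero_of_zsmul_mk_single
    (prod_mul_relationDefect_smul_eq_zero a _ succ_smul_mk_single) y

end KGroup

/-- Let `n ≥ 2`, `γᵢ ≥ 1`, not all `γᵢ = 1` when `n = 2`. Then
`ℤⁿ/⟨eᵢ - Σ_{j≠i} γⱼ eⱼ⟩` is finite; in particular it is a torsion group.
(This is the assertion that `K₀(𝒜_Γ)` is torsion, hence `K₁(𝒜_Γ) = 0`, for a free product
of finite groups `Γ = Γ₁ * ⋯ * Γₙ` with `|Γᵢ| = γᵢ + 1`.) -/
theorem K0_finite_torsion (n : ℕ) (hn : 2 ≤ n) (γ : Fin n → ℕ) (hγ : ∀ i, 1 ≤ γ i)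
    (hexc : ¬ (n = 2 ∧ ∀ i, γ i = 1)) :
    Finite (KGroup n γ) ∧ ∀ x : KGroup n γ, ∃ c : ℕ, 0 < c ∧ c • x = 0 := by
  have htors := KGroup.isAddTorsion hn hγ hexc
  exact ⟨AddCommGroup.finite_of_fg_isAddTorsion _ htors,
    fun x => isOfFinAddOrder_iff_nsmul_eq_zero.1 (htors x)⟩
end
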